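/- arXiv:1411.2468 — 3 statements merged into one kernel-verified Lean document; each statement's English description precedes it below -/
import Mathlib

section
/- Let E ⊂ ℝ^D be finite with 2 ≤ card(E) ≤ k, and let 0 < ε < C for a small constant C. Then there exists τ with exp(−C_k/ε)·diam(E) ≤ τ ≤ exp(−1/ε)·diam(E) (C_k depending only on k and D) and a partition of E into nonempty subsets E_1,...,E_m such that: card(E_ν) ≤ k−1 for each ν; diam(E_ν) ≤ exp(−5/ε)·τ for each ν; and dist(E_ν, E_{ν'}) ≥ τ for ν ≠ ν'. -/
noncomputable section

abbrev Euc (D : ℕ) : Type := EuclideanSpace ℝ (Fin D)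

def DistortedDiffeo (D : ℕ) (ε : ℝ) (Φ : Euc D → Euc D) : Prop :=
  ContDiff ℝ (⊤ : ℕ∞) Φ ∧ Function.Bijective Φ ∧
    ∀ x v : Euc D,
      (1 + ε)⁻¹ * ‖v‖ ^ 2 ≤ ‖fderiv ℝ Φ x v‖ ^ 2 ∧
      ‖fderiv ℝ Φ x v‖ ^ 2 ≤ (1 + ε) * ‖v‖ ^ 2

def ProperMap (D : ℕ) (Φ : Euc D → Euc D) : Prop :=
  ∀ x : Euc D, 0 < LinearMap.det ((fderiv ℝ Φ x).toLinearMap)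

def simplexVol (D : ℕ) (z : Fin (D+1) → Euc D) : ℝ :=
  |(Matrix.of fun i j : Fin D => (z i.succ - z 0) j).det| / (Nat.factorial D : ℝ)

def gramDet (D m : ℕ) (v : Fin m → Euc D) : ℝ :=
  (Matrix.of fun i j : Fin m => (inner ℝ (v i) (v j) : ℝ)).det

def PosBlock (D : ℕ) (η : ℝ) (φ : Euc D → Euc D) (E : Finset (Euc D))
    (x : Fin (D+1) → Euc D) : Prop :=
  (∀ i, x i ∈ E) ∧
  η ^ D * Metric.diam (Set.range x) ^ D ≤ simplexVol D x ∧
  ∃ T : Euc D →ᵃ[ℝ] Euc D, (∀ i, T (x i) = φ (x i)) ∧ 0 < LinearMap.det T.linear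

def NegBlock (D : ℕ) (η : ℝ) (φ : Euc D → Euc D) (E : Finset (Euc D))
    (x : Fin (D+1) → Euc D) : Prop :=
  (∀ i, x i ∈ E) ∧
  η ^ D * Metric.diam (Set.range x) ^ D ≤ simplexVol D x ∧
  ∃ T : Euc D →ᵃ[ℝ] Euc D, (∀ i, T (x i) = φ (x i)) ∧ LinearMap.det T.linear < 0

def rotEntry (θ : ℝ) (p q : ℕ) : ℝ :=
  if p = 0 then (if q = 0 then Real.cos θ else Real.sin θ)
  else (if q = 0 then -Real.sin θ else Real.cos θ)

def slowTwistMatrix (D m : ℕ) (f : Fin m → ℝ → ℝ) (t : ℝ) :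
    Matrix (Fin D) (Fin D) ℝ :=
  Matrix.of fun a b =>
    if ha : (a : ℕ) / 2 < m ∧ (b : ℕ) / 2 < m then
      if (a : ℕ) / 2 = (b : ℕ) / 2 then
        rotEntry (f ⟨(a : ℕ) / 2, ha.1⟩ t) ((a : ℕ) % 2) ((b : ℕ) % 2)
      else 0
    else if a = b then 1 else 0

/-- clustering lemma. -/
theorem stmt6 (D k : ℕ) (hk : 2 ≤ k) :
    ∃ C : ℝ, 0 < C ∧ ∃ Ck : ℝ, 0 < Ck ∧
      ∀ ε : ℝ, 0 < ε → ε < C →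
      ∀ E : Finset (Euc D), 2 ≤ E.card → E.card ≤ k →
      ∃ τ : ℝ,
        Real.exp (-Ck / ε) * Metric.diam (E : Set (Euc D)) ≤ τ ∧
        τ ≤ Real.exp (-1 / ε) * Metric.diam (E : Set (Euc D)) ∧
        ∃ parts : Finset (Finset (Euc D)),
          (∀ S ∈ parts, S.Nonempty ∧ S ⊆ E) ∧
          (∀ x ∈ E, ∃! S : Finset (Euc D), S ∈ parts ∧ x ∈ S) ∧
          (∀ S ∈ parts, S.card ≤ k - 1) ∧
          (∀ S ∈ parts, Metric.diam (S : Set (Euc D)) ≤ Real.exp (-5 / ε) * τ) ∧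
          (∀ S ∈ parts, ∀ T ∈ parts, S ≠ T → ∀ x ∈ S, ∀ y ∈ T, τ ≤ dist x y) := by
  classical
  have hk1 : (1:ℝ) < k := by exact_mod_cast lt_of_lt_of_le one_lt_two hk
  have hlogk : 0 < Real.log k + 1 := by have := Real.log_pos hk1; linarith
  refine ⟨1 / (Real.log k + 1), one_div_pos.mpr hlogk, (1 + 6*k^2 : ℝ), by positivity, ?_⟩
  intro ε hε hεC E hE2 hEk
  set d := Metric.diam (E : Set (Euc D)) with hd
  have hEb : Bornology.IsBounded (E : Set (Euc D)) := E.finite_toSet.isBounded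
  have hd0 : 0 < d := by
    obtain ⟨x, hx, y, hy, hxy⟩ := Finset.one_lt_card.mp (lt_of_lt_of_le one_lt_two hE2)
    have h1 : dist x y ≤ d := Metric.dist_le_diam_of_mem hEb hx hy
    have h2 : 0 < dist x y := dist_pos.mpr hxy
    linarith
  have hk0 : (0:ℝ) < k := by linarith
  have hL : Real.log k + 1 < 1/ε := by
    rw [lt_div_iff₀ hε]
    have h1 := (lt_div_iff₀ hlogk).mp hεC
    nlinarith
  have hkexp : (k:ℝ) ≤ Real.exp (1/ε) := by
    calc (k:ℝ) = Real.exp (Real.log k) := (Real.exp_log (by linarith)).symm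
      _ ≤ Real.exp (1/ε) := Real.exp_le_exp.mpr (by linarith)
  set τf : ℕ → ℝ := fun j => Real.exp (-(1+6*j)/ε) * d with hτf
  set δf : ℕ → ℝ := fun j => Real.exp (-(6+6*j)/ε) * d / k with hδf
  have hτpos : ∀ j, 0 < τf j := fun j => mul_pos (Real.exp_pos _) hd0
  have hδpos : ∀ j, 0 < δf j := fun j => div_pos (mul_pos (Real.exp_pos _) hd0) hk0
  have hX : ∀ j : ℕ, Real.exp (-5/ε) * Real.exp (-(1+6*(j:ℝ))/ε) = Real.exp (-(6+6*(j:ℝ))/ε) := by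
    intro j
    rw [← Real.exp_add]
    congr 1
    field_simp
    ring
  have h2δ : ∀ j, 2 * δf j ≤ Real.exp (-5/ε) * τf j := by
    intro j
    have hXj := hX j
    simp only [hτf, hδf]
    rw [← mul_assoc, hXj]
    have hXd : 0 ≤ Real.exp (-(6+6*(j:ℝ))/ε) * d := le_of_lt (mul_pos (Real.exp_pos _) hd0)
    have h2k : (2:ℝ)/k ≤ 1 := by
      rw [div_le_one hk0]; exact_mod_cast hk
    calc 2 * (Real.exp (-(6+6*(j:ℝ))/ε) * d / k) = (2/k) * (Real.exp (-(6+6*(j:ℝ))/ε) * d) := by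
          ring
      _ ≤ 1 * (Real.exp (-(6+6*(j:ℝ))/ε) * d) := mul_le_mul_of_nonneg_right h2k hXd
      _ = Real.exp (-(6+6*(j:ℝ))/ε) * d := one_mul _
  have hdisj : ∀ i j : ℕ, i < j → τf j ≤ δf i := by
    intro i j hij
    have key : Real.exp (-(1+6*(j:ℝ))/ε) * k ≤ Real.exp (-(6+6*(i:ℝ))/ε) := by
      calc Real.exp (-(1+6*(j:ℝ))/ε) * k ≤ Real.exp (-(1+6*(j:ℝ))/ε) * Real.exp (1/ε) :=
            mul_le_mul_of_nonneg_left hkexp (Real.exp_pos _).le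
        _ = Real.exp ((-(1+6*(j:ℝ)) + 1)/ε) := by rw [← Real.exp_add]; congr 1; field_simp
        _ ≤ Real.exp (-(6+6*(i:ℝ))/ε) := by
            apply Real.exp_le_exp.mpr
            apply div_le_div_of_nonneg_right ?_ hε.le |>.trans_eq rfl
            have : (i:ℝ) + 1 ≤ (j:ℝ) := by exact_mod_cast hij
            nlinarith
    simp only [hτf, hδf]
    rw [le_div_iff₀ hk0]
    calc Real.exp (-(1+6*(j:ℝ))/ε) * d * k = (Real.exp (-(1+6*(j:ℝ))/ε) * k) * d := by ring
      _ ≤ Real.exp (-(6+6*(i:ℝ))/ε) * d := mul_le_mul_of_nonneg_right key hd0.le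
  -- pigeonhole: find a good scale
  set Ds : Finset ℝ := (E ×ˢ E).image (fun p => dist p.1 p.2) with hDs
  have hpi : ∃ j ∈ Finset.range (k^2+1), ∀ x ∈ E, ∀ y ∈ E,
      dist x y ∉ Set.Ioo (δf j) (τf j) := by
    by_contra hcon
    push_neg at hcon
    have h2 : ∀ j : ℕ, ∃ r : ℝ, j ∈ Finset.range (k^2+1) →
        r ∈ Ds ∧ r ∈ Set.Ioo (δf j) (τf j) := by
      intro j
      by_cases hj : j ∈ Finset.range (k^2+1)
      · obtain ⟨x, hx, y, hy, hxy⟩ := hcon j hj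
        exact ⟨dist x y, fun _ => ⟨Finset.mem_image.mpr ⟨(x, y),
          Finset.mem_product.mpr ⟨hx, hy⟩, rfl⟩, hxy⟩⟩
      · exact ⟨0, fun h => absurd h hj⟩
    choose f hf using h2
    have hinj : Set.InjOn f (Finset.range (k^2+1)) := by
      intro a ha b hb hab
      by_contra hne
      rcases lt_or_gt_of_ne hne with h | h
      · have h1 := (hf a ha).2
        have h2 := (hf b hb).2
        have := hdisj a b h
        rw [hab] at h1
        exact absurd (lt_trans h2.2 (lt_of_le_of_lt this h1.1)) (lt_irrefl _)
      · have h1 := (hf a ha).2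
        have h2 := (hf b hb).2
        have := hdisj b a h
        rw [hab] at h1
        exact absurd (lt_trans h1.2 (lt_of_le_of_lt this h2.1)) (lt_irrefl _)
    have hcard : (Finset.range (k^2+1)).card ≤ Ds.card :=
      Finset.card_le_card_of_injOn f (fun j hj => (hf j hj).1) hinj
    have hDscard : Ds.card ≤ k^2 := by
      calc Ds.card ≤ (E ×ˢ E).card := Finset.card_image_le
        _ = E.card * E.card := Finset.card_product E E
        _ ≤ k * k := Nat.mul_le_mul hEk hEk
        _ = k^2 := (sq k).symm
    rw [Finset.card_range] at hcard
    omega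
  obtain ⟨j, hjmem, hgap⟩ := hpi
  have hjle : j ≤ k^2 := by
    have := Finset.mem_range.mp hjmem; omega
  refine ⟨τf j, ?_, ?_, ?_⟩
  · -- lower bound
    simp only [hτf]
    apply mul_le_mul_of_nonneg_right _ hd0.le
    apply Real.exp_le_exp.mpr
    apply div_le_div_of_nonneg_right ?_ hε.le |>.trans_eq rfl
    have : (j:ℝ) ≤ (k:ℝ)^2 := by exact_mod_cast hjle
    push_cast
    nlinarith
  · -- upper bound
    simp only [hτf]
    apply mul_le_mul_of_nonneg_right _ hd0.le
    apply Real.exp_le_exp.mpr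
    apply div_le_div_of_nonneg_right ?_ hε.le |>.trans_eq rfl
    have : (0:ℝ) ≤ (j:ℝ) := Nat.cast_nonneg j
    linarith
  -- the partition
  set δ := δf j with hδdef
  set τ := τf j with hτdef
  have hδ0 : 0 < δ := hδpos j
  have hτ0 : 0 < τ := hτpos j
  have hδτlt : δ < τ := by
    have h1 := h2δ j
    have h2 : Real.exp (-5/ε) * τ < 1 * τ := by
      apply mul_lt_mul_of_pos_right _ hτ0
      exact Real.exp_lt_one_iff.mpr (div_neg_of_neg_of_pos (by norm_num) hε)
    rw [one_mul] at h2
    linarith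
  have hclose : ∀ a ∈ E, ∀ b ∈ E, dist a b < τ → dist a b ≤ δ := by
    intro a ha b hb hab
    by_contra hgt
    exact hgap a ha b hb ⟨lt_of_not_ge hgt, hab⟩
  have h5τ : Real.exp (-5/ε) * τ < τ := by
    nth_rewrite 2 [← one_mul τ]
    exact mul_lt_mul_of_pos_right (Real.exp_lt_one_iff.mpr (div_neg_of_neg_of_pos (by norm_num) hε)) hτ0
  have htrans : ∀ a ∈ E, ∀ b ∈ E, ∀ c ∈ E, dist a b ≤ δ → dist b c ≤ δ → dist a c ≤ δ := by
    intro a ha b hb c hc h1 h2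
    apply hclose a ha c hc
    calc dist a c ≤ dist a b + dist b c := dist_triangle a b c
      _ ≤ 2 * δ := by linarith
      _ ≤ Real.exp (-5/ε) * τ := h2δ j
      _ < τ := h5τ
  set clus : Euc D → Finset (Euc D) := fun z => E.filter (fun y => dist z y ≤ δ) with hclus
  have hclusmem : ∀ z, ∀ y, y ∈ clus z ↔ y ∈ E ∧ dist z y ≤ δ := by
    intro z y; simp [hclus]
  have hself : ∀ z ∈ E, z ∈ clus z := by
    intro z hz; rw [hclusmem]; exact ⟨hz, by simp [hδ0.le]⟩
  have hsame : ∀ z ∈ E, ∀ w ∈ E, dist z w ≤ δ → clus z = clus w := by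
    intro z hz w hw hzw
    ext y
    rw [hclusmem, hclusmem]
    constructor
    · rintro ⟨hy, hzy⟩
      refine ⟨hy, htrans w hw z hz y hy (by rw [dist_comm]; exact hzw) hzy⟩
    · rintro ⟨hy, hwy⟩
      exact ⟨hy, htrans z hz w hw y hy hzw hwy⟩
  refine ⟨E.image clus, ?_, ?_, ?_, ?_, ?_⟩
  · -- nonempty and subset
    intro S hS
    obtain ⟨z, hz, rfl⟩ := Finset.mem_image.mp hS
    exact ⟨⟨z, hself z hz⟩, Finset.filter_subset _ E⟩
  · -- partition
    intro x hx
    refine ⟨clus x, ⟨Finset.mem_image_of_mem clus hx, hself x hx⟩, ?_⟩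
    rintro S ⟨hS, hxS⟩
    obtain ⟨z, hz, rfl⟩ := Finset.mem_image.mp hS
    obtain ⟨hxE, hzx⟩ := (hclusmem z x).mp hxS
    exact hsame z hz x hx hzx
  · -- card bound
    intro S hS
    obtain ⟨z, hz, rfl⟩ := Finset.mem_image.mp hS
    have hsub : clus z ⊆ E := Finset.filter_subset _ E
    have hdiamS : Metric.diam ((clus z : Set (Euc D))) ≤ Real.exp (-5/ε) * τ := by
      apply Metric.diam_le_of_forall_dist_le (by positivity)
      intro x hx y hy
      obtain ⟨hxE, hzx⟩ := (hclusmem z x).mp hx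
      obtain ⟨hyE, hzy⟩ := (hclusmem z y).mp hy
      calc dist x y ≤ dist x z + dist z y := dist_triangle x z y
        _ ≤ 2 * δ := by rw [dist_comm x z]; linarith
        _ ≤ Real.exp (-5/ε) * τ := h2δ j
    have hne : clus z ≠ E := by
      intro heq
      rw [heq] at hdiamS
      have h6 : Real.exp (-5/ε) * τ < d := by
        have hτd : τ ≤ Real.exp (-1/ε) * d := by
          simp only [hτdef, hτf]
          apply mul_le_mul_of_nonneg_right _ hd0.le
          apply Real.exp_le_exp.mpr
          apply div_le_div_of_nonneg_right ?_ hε.le |>.trans_eq rfl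
          have : (0:ℝ) ≤ (j:ℝ) := Nat.cast_nonneg j
          linarith
        have he5 : Real.exp (-5/ε) < 1 := Real.exp_lt_one_iff.mpr (div_neg_of_neg_of_pos (by norm_num) hε)
        have he1 : Real.exp (-1/ε) < 1 := Real.exp_lt_one_iff.mpr (div_neg_of_neg_of_pos (by norm_num) hε)
        calc Real.exp (-5/ε) * τ ≤ 1 * τ :=
              mul_le_mul_of_nonneg_right he5.le hτ0.le
          _ = τ := one_mul τ
          _ ≤ Real.exp (-1/ε) * d := hτd
          _ < 1 * d := mul_lt_mul_of_pos_right he1 hd0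
          _ = d := one_mul d
      rw [hd] at h6
      linarith
    have hlt : (clus z).card < E.card := Finset.card_lt_card (ssubset_of_subset_of_ne hsub hne)
    omega
  · -- diameter bound
    intro S hS
    obtain ⟨z, hz, rfl⟩ := Finset.mem_image.mp hS
    apply Metric.diam_le_of_forall_dist_le (by positivity)
    intro x hx y hy
    obtain ⟨hxE, hzx⟩ := (hclusmem z x).mp hx
    obtain ⟨hyE, hzy⟩ := (hclusmem z y).mp hy
    calc dist x y ≤ dist x z + dist z y := dist_triangle x z y
      _ ≤ 2 * δ := by rw [dist_comm x z]; linarith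
      _ ≤ Real.exp (-5/ε) * τ := h2δ j
  · -- separation
    intro S hS T hT hST x hx y hy
    obtain ⟨z, hz, rfl⟩ := Finset.mem_image.mp hS
    obtain ⟨w, hw, rfl⟩ := Finset.mem_image.mp hT
    obtain ⟨hxE, hzx⟩ := (hclusmem z x).mp hx
    obtain ⟨hyE, hwy⟩ := (hclusmem w y).mp hy
    by_contra hlt
    push_neg at hlt
    have hxy : dist x y ≤ δ := hclose x hxE y hyE hlt
    have hzy : dist z y ≤ δ := htrans z hz x hxE y hyE hzx hxy
    have hzw : dist z w ≤ δ := htrans z hz y hyE w hw hzy (by rw [dist_comm]; exact hwy)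
    exact hST (hsame z hz w hw hzw)
end
end

section
/- Let 0 < η < 1 and let E ⊂ ℝ^D be a finite set with diam(E) = 1. Assume V_D(E) ≤ η^D, where V_D(E) is the maximum D-dimensional volume of a D-simplex with vertices in E. Then there exists a hyperplane H ⊂ ℝ^D such that every point of E lies within distance Cη of H, where C depends only on D; consequently the reflection ρ through H is an improper Euclidean motion satisfying |ρ(z) − z| ≤ Cη for all z ∈ E. -/
noncomputable section

section Helpers
open Submodule Finset InnerProductSpace

instance (n : ℕ) : WellFoundedLT (Fin n) := inferInstance

-- projection distance is monotone in the subspace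
lemma projDist_mono {D : ℕ} {K K' : Submodule ℝ (Euc D)} (h : K ≤ K') (w : Euc D) :
    ‖w - (orthogonalProjection K' w : Euc D)‖ ≤ ‖w - (orthogonalProjection K w : Euc D)‖ := by
  rw [← starProjection_apply K' w, starProjection_minimal]
  have hb : BddBelow (Set.range fun x : K' => ‖w - (x : Euc D)‖) := by
    refine ⟨0, ?_⟩
    rintro r ⟨x, rfl⟩
    positivity
  exact ciInf_le hb (⟨(orthogonalProjection K w : Euc D), h (orthogonalProjection K w).2⟩ : K')

-- greedy selection
lemma exists_greedy {D : ℕ} (S : Finset (Euc D)) (hS : S.Nonempty) (k : ℕ) :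
    ∃ x : Fin k → Euc D, (∀ i, x i ∈ S) ∧
      ∀ i : Fin k, ∀ w ∈ S,
        ‖w - (orthogonalProjection (span ℝ (x '' Set.Iio i)) w : Euc D)‖ ≤
        ‖x i - (orthogonalProjection (span ℝ (x '' Set.Iio i)) (x i) : Euc D)‖ := by
  induction k with
  | zero => exact ⟨fun i => i.elim0, fun i => i.elim0, fun i => i.elim0⟩
  | succ k ih =>
    obtain ⟨x, hxS, hxmax⟩ := ih
    set K : Submodule ℝ (Euc D) := span ℝ (Set.range x) with hK
    obtain ⟨y, hyS, hymax⟩ :=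
      S.exists_max_image (fun w => ‖w - (orthogonalProjection K w : Euc D)‖) hS
    refine ⟨Fin.snoc x y, ?_, ?_⟩
    · intro i
      refine Fin.lastCases ?_ ?_ i
      · rwa [Fin.snoc_last]
      · intro j; rw [Fin.snoc_castSucc]; exact hxS j
    · have hlast : (Fin.snoc x y : Fin (k+1) → Euc D) '' Set.Iio (Fin.last k)
          = Set.range x := by
        ext u
        simp only [Set.mem_image, Set.mem_Iio, Set.mem_range]
        constructor
        · rintro ⟨a, ha, rfl⟩
          have hne : a ≠ Fin.last k := ne_of_lt ha
          refine ⟨a.castPred hne, ?_⟩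
          conv_rhs => rw [← Fin.castSucc_castPred a hne]
          rw [Fin.snoc_castSucc]
        · rintro ⟨j, rfl⟩
          exact ⟨j.castSucc, Fin.castSucc_lt_last j, by simp⟩
      have hcast : ∀ j : Fin k, (Fin.snoc x y : Fin (k+1) → Euc D) '' Set.Iio j.castSucc
          = x '' Set.Iio j := by
        intro j
        ext u
        simp only [Set.mem_image, Set.mem_Iio]
        constructor
        · rintro ⟨a, ha, rfl⟩
          have hne : a ≠ Fin.last k := by
            intro h; rw [h] at ha
            exact absurd (j.castSucc_lt_last) (not_lt.2 ha.le)
          refine ⟨a.castPred hne, ?_, ?_⟩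
          · rwa [← Fin.castSucc_lt_castSucc_iff, Fin.castSucc_castPred]
          · conv_rhs => rw [← Fin.castSucc_castPred a hne]
            rw [Fin.snoc_castSucc]
        · rintro ⟨b, hb, rfl⟩
          exact ⟨b.castSucc, Fin.castSucc_lt_castSucc_iff.2 hb, by simp⟩
      intro i
      refine Fin.lastCases ?_ ?_ i
      · rw [hlast, Fin.snoc_last, ← hK]
        exact fun w hw => hymax w hw
      · intro j
        rw [hcast j, Fin.snoc_castSucc]
        exact hxmax j

lemma det_eq_prod_gs {D : ℕ} (x : Fin D → Euc D) :
    |(Matrix.of fun i j : Fin D => x i j).det|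
      = ∏ i : Fin D, ‖gramSchmidt ℝ x i‖ := by
  classical
  set g : Fin D → Euc D := gramSchmidt ℝ x with hg
  set L : Matrix (Fin D) (Fin D) ℝ := Matrix.of fun n i =>
    if i < n then (inner ℝ (g i) (x n) : ℝ) / (‖g i‖ : ℝ) ^ 2
    else if i = n then 1 else 0 with hL
  set G : Matrix (Fin D) (Fin D) ℝ := Matrix.of fun i j => g i j with hG
  have hM : (Matrix.of fun i j : Fin D => x i j) = L * G := by
    ext n j
    have hdef := gramSchmidt_def'' ℝ x n
    simp only [RCLike.ofReal_real_eq_id, id_eq] at hdef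
    have hxn : x n j = g n j + ∑ i ∈ Finset.Iio n,
        ((inner ℝ (g i) (x n) : ℝ) / (‖g i‖ : ℝ) ^ 2) * g i j := by
      calc x n j = EuclideanSpace.proj j (x n) := rfl
        _ = EuclideanSpace.proj j (g n + ∑ i ∈ Finset.Iio n,
              ((inner ℝ (g i) (x n) : ℝ) / (‖g i‖ : ℝ) ^ 2) • g i) := by rw [← hdef]
        _ = g n j + ∑ i ∈ Finset.Iio n,
              ((inner ℝ (g i) (x n) : ℝ) / (‖g i‖ : ℝ) ^ 2) * g i j := by
            rw [map_add, map_sum]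
            simp
    have hrhs : (L * G) n j = ∑ i : Fin D,
        (if i < n then ((inner ℝ (g i) (x n) : ℝ) / (‖g i‖ : ℝ) ^ 2) * g i j
         else if i = n then g i j else 0) := by
      rw [Matrix.mul_apply]
      refine Finset.sum_congr rfl fun i _ => ?_
      simp only [hL, hG, Matrix.of_apply]
      by_cases h1 : i < n
      · simp [h1]
      · by_cases h2 : i = n <;> simp [h1, h2]
    rw [Matrix.of_apply, hxn, hrhs]
    have hsplit : ∀ i : Fin D,
        (if i < n then ((inner ℝ (g i) (x n) : ℝ) / (‖g i‖ : ℝ) ^ 2) * g i j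
         else if i = n then g i j else 0)
        = (if i < n then ((inner ℝ (g i) (x n) : ℝ) / (‖g i‖ : ℝ) ^ 2) * g i j else 0)
          + (if i = n then g i j else 0) := by
      intro i
      by_cases h1 : i < n
      · simp [h1, ne_of_lt h1]
      · by_cases h2 : i = n <;> simp [h1, h2]
    rw [Finset.sum_congr rfl fun i _ => hsplit i, Finset.sum_add_distrib,
      Finset.sum_ite_eq' Finset.univ n (fun i => g i j), if_pos (Finset.mem_univ n)]
    rw [← Finset.sum_filter]
    have : Finset.filter (fun i => i < n) Finset.univ = Finset.Iio n := by
      ext i; simp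
    rw [this, add_comm]
  have hdetL : L.det = 1 := by
    have htri : L.BlockTriangular OrderDual.toDual := by
      intro i j hij
      have h1 : ¬ j < i := by
        simp only [OrderDual.toDual_lt_toDual] at hij
        exact not_lt.2 hij.le
      have h2 : j ≠ i := by
        simp only [OrderDual.toDual_lt_toDual] at hij
        exact ne_of_gt hij
      simp [hL, h1, h2]
    rw [Matrix.det_of_lowerTriangular L htri]
    have : ∀ i : Fin D, L i i = 1 := by intro i; simp [hL]
    simp [this]
  have hGG : G * G.transpose = Matrix.diagonal fun i => ‖g i‖ ^ 2 := by
    ext i j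
    rw [Matrix.mul_apply]
    have hin : (inner ℝ (g i) (g j) : ℝ) = ∑ k : Fin D, g i k * g j k := by
      rw [PiLp.inner_apply]; simp [RCLike.inner_apply, mul_comm]
    by_cases h : i = j
    · subst h
      simp only [Matrix.diagonal_apply_eq]
      rw [← real_inner_self_eq_norm_sq, hin]
      refine Finset.sum_congr rfl fun k _ => ?_
      simp [hG, Matrix.transpose_apply]
    · rw [Matrix.diagonal_apply_ne _ h]
      have := gramSchmidt_orthogonal ℝ x h
      rw [hin] at this
      rw [← this]
      refine Finset.sum_congr rfl fun k _ => ?_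
      simp [hG, Matrix.transpose_apply]
  have hsq : (Matrix.of fun i j : Fin D => x i j).det ^ 2 = ∏ i : Fin D, ‖g i‖ ^ 2 := by
    rw [hM, Matrix.det_mul, hdetL, one_mul]
    have : G.det ^ 2 = (G * G.transpose).det := by
      rw [Matrix.det_mul, Matrix.det_transpose, sq]
    rw [this, hGG, Matrix.det_diagonal]
  have h1 : |(Matrix.of fun i j : Fin D => x i j).det| ^ 2
      = (∏ i : Fin D, ‖g i‖) ^ 2 := by
    rw [sq_abs, hsq, ← Finset.prod_pow]
  have h2 : (0:ℝ) ≤ |(Matrix.of fun i j : Fin D => x i j).det| := abs_nonneg _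
  have h3 : (0:ℝ) ≤ ∏ i : Fin D, ‖g i‖ := Finset.prod_nonneg fun i _ => norm_nonneg _
  nlinarith [h1, h2, h3]

lemma sub_proj_eq_gramSchmidt {D : ℕ} (x : Fin D → Euc D) (i : Fin D) :
    x i - (orthogonalProjection (span ℝ (x '' Set.Iio i)) (x i) : Euc D)
      = gramSchmidt ℝ x i := by
  set g : Fin D → Euc D := gramSchmidt ℝ x with hg
  set K : Submodule ℝ (Euc D) := span ℝ (x '' Set.Iio i) with hK
  have hmem : x i - g i ∈ K := by
    have hsum : x i - g i
        = ∑ j ∈ Finset.Iio i, (orthogonalProjection (ℝ ∙ g j) (x i) : Euc D) := by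
      rw [hg, gramSchmidt_def ℝ x i, sub_sub_cancel]
      rfl
    rw [hsum, hK, ← span_gramSchmidt_Iio ℝ x i]
    refine Submodule.sum_mem _ fun j hj => ?_
    have h1 : (orthogonalProjection (ℝ ∙ g j) (x i) : Euc D) ∈ (ℝ ∙ g j) :=
      (orthogonalProjection (ℝ ∙ g j) (x i)).2
    refine span_mono ?_ h1
    simp only [Set.singleton_subset_iff]
    exact ⟨j, Finset.mem_Iio.1 hj, rfl⟩
  have horth : g i ∈ Kᗮ := by
    rw [hK, ← span_gramSchmidt_Iio ℝ x i]
    have hiso : span ℝ (g '' Set.Iio i) ⟂ span ℝ {g i} := by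
      rw [Submodule.isOrtho_span]
      rintro u ⟨j, hj, rfl⟩ w rfl
      exact gramSchmidt_orthogonal ℝ x (ne_of_lt hj)
    have h2 : span ℝ {g i} ≤ (span ℝ (g '' Set.Iio i))ᗮ := hiso.symm
    exact h2 (Submodule.mem_span_singleton_self _)
  have hproj : (orthogonalProjection K (x i) : Euc D) = x i - g i := by
    rw [← starProjection_apply]
    refine eq_starProjection_of_mem_orthogonal hmem ?_
    rw [sub_sub_cancel]
    exact horth
  rw [hproj, sub_sub_cancel]

end Helpers

open Submodule Finset InnerProductSpace

/-- a set of unit diameter with all simplex volumes `≤ η^D` lies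
within `Cη` of a hyperplane `H = {x : ⟪v,x⟫ = a}`, and the reflection through `H`
moves each point of `E` by at most `Cη`. -/
theorem stmt7 (D : ℕ) (hD : 1 ≤ D) :
    ∃ C : ℝ, 0 < C ∧
    ∀ η : ℝ, 0 < η → η < 1 →
    ∀ E : Finset (Euc D), Metric.diam (E : Set (Euc D)) = 1 →
    (∀ z : Fin (D+1) → Euc D, (∀ i, z i ∈ E) → simplexVol D z ≤ η ^ D) →
    ∃ (v : Euc D) (a : ℝ), ‖v‖ = 1 ∧
      (∀ z ∈ E, |(inner ℝ v z : ℝ) - a| ≤ C * η) ∧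
      (∀ z ∈ E, ‖(z + (2 * (a - (inner ℝ v z : ℝ))) • v) - z‖ ≤ C * η) := by
  classical
  refine ⟨2 * (Nat.factorial D : ℝ), by positivity, ?_⟩
  intro η hη0 hη1 E hdiam hvol
  have hfac1 : (1:ℝ) ≤ (Nat.factorial D : ℝ) := by
    exact_mod_cast Nat.one_le_iff_ne_zero.2 (Nat.factorial_ne_zero D)
  -- E is nonempty
  have hEne : E.Nonempty := by
    rcases E.eq_empty_or_nonempty with h | h
    · rw [h] at hdiam; simp at hdiam
    · exact h
  obtain ⟨x₀, hx₀⟩ := hEne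
  set S : Finset (Euc D) := E.image (fun z => z - x₀) with hSdef
  have hSne : S.Nonempty := ⟨x₀ - x₀, Finset.mem_image_of_mem _ hx₀⟩
  obtain ⟨x, hxS, hxmax⟩ := exists_greedy S hSne D
  set g : Fin D → Euc D := gramSchmidt ℝ x with hg
  have hi₀lt : D - 1 < D := by omega
  set i₀ : Fin D := ⟨D - 1, hi₀lt⟩ with hi₀
  set K : Submodule ℝ (Euc D) := span ℝ (x '' Set.Iio i₀) with hKdef
  -- the last greedy distance is the smallest
  have hd_le : ∀ i : Fin D, ‖g i₀‖ ≤ ‖g i‖ := by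
    intro i
    have hle : i ≤ i₀ := by
      rw [Fin.le_def]
      simp only [hi₀]
      omega
    calc ‖g i₀‖
        = ‖x i₀ - (orthogonalProjection (span ℝ (x '' Set.Iio i₀)) (x i₀) : Euc D)‖ :=
          (congrArg _ (sub_proj_eq_gramSchmidt x i₀)).symm
      _ ≤ ‖x i₀ - (orthogonalProjection (span ℝ (x '' Set.Iio i)) (x i₀) : Euc D)‖ :=
          projDist_mono (span_mono (Set.image_mono (Set.Iio_subset_Iio hle))) _
      _ ≤ ‖x i - (orthogonalProjection (span ℝ (x '' Set.Iio i)) (x i) : Euc D)‖ :=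
          hxmax i (x i₀) (hxS i₀)
      _ = ‖g i‖ := congrArg _ (sub_proj_eq_gramSchmidt x i)
  have hprod : ‖g i₀‖ ^ D ≤ ∏ i : Fin D, ‖g i‖ := by
    calc ‖g i₀‖ ^ D = ∏ _i : Fin D, ‖g i₀‖ := by
          rw [Finset.prod_const, Finset.card_univ, Fintype.card_fin]
      _ ≤ ∏ i : Fin D, ‖g i‖ :=
          Finset.prod_le_prod (fun _ _ => norm_nonneg _) (fun i _ => hd_le i)
  -- determinant bound from the volume hypothesis
  have hdet : |(Matrix.of fun i j : Fin D => x i j).det|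
      ≤ (Nat.factorial D : ℝ) * η ^ D := by
    set z : Fin (D+1) → Euc D := Fin.cases x₀ (fun j => x₀ + x j) with hz
    have hzE : ∀ i, z i ∈ E := by
      intro i
      induction i using Fin.cases with
      | zero => simpa [hz] using hx₀
      | succ j =>
        have hxj : x j ∈ S := hxS j
        rw [hSdef, Finset.mem_image] at hxj
        obtain ⟨e, heE, he⟩ := hxj
        have : x₀ + x j = e := by rw [← he]; abel
        simpa [hz, this] using heE
    have hv := hvol z hzE
    have hmat : (Matrix.of fun i j : Fin D => (z i.succ - z 0) j)
        = (Matrix.of fun i j : Fin D => x i j) := by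
      ext i j
      have h1 : z i.succ = x₀ + x i := by simp [hz]
      have h2 : z 0 = x₀ := by simp [hz]
      rw [Matrix.of_apply, Matrix.of_apply, h1, h2]
      have : x₀ + x i - x₀ = x i := by abel
      rw [this]
    rw [simplexVol, hmat] at hv
    have hfacpos : (0:ℝ) < (Nat.factorial D : ℝ) := by linarith
    calc |(Matrix.of fun i j : Fin D => x i j).det|
        = |(Matrix.of fun i j : Fin D => x i j).det| / (Nat.factorial D : ℝ)
            * (Nat.factorial D : ℝ) := by field_simp
      _ ≤ η ^ D * (Nat.factorial D : ℝ) := by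
          exact mul_le_mul_of_nonneg_right hv (le_of_lt hfacpos)
      _ = (Nat.factorial D : ℝ) * η ^ D := by ring
  -- hence the last greedy distance is at most D! * η
  have hball : ‖g i₀‖ ≤ (Nat.factorial D : ℝ) * η := by
    have h1 : ‖g i₀‖ ^ D ≤ ((Nat.factorial D : ℝ) * η) ^ D := by
      calc ‖g i₀‖ ^ D ≤ ∏ i : Fin D, ‖g i‖ := hprod
        _ = |(Matrix.of fun i j : Fin D => x i j).det| := (det_eq_prod_gs x).symm
        _ ≤ (Nat.factorial D : ℝ) * η ^ D := hdet
        _ ≤ (Nat.factorial D : ℝ) ^ D * η ^ D := by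
            have : (Nat.factorial D : ℝ) ≤ (Nat.factorial D : ℝ) ^ D := by
              calc (Nat.factorial D : ℝ) = (Nat.factorial D : ℝ) ^ 1 := (pow_one _).symm
                _ ≤ (Nat.factorial D : ℝ) ^ D := pow_le_pow_right₀ hfac1 hD
            have hηD : (0:ℝ) ≤ η ^ D := le_of_lt (pow_pos hη0 D)
            exact mul_le_mul_of_nonneg_right this hηD
        _ = ((Nat.factorial D : ℝ) * η) ^ D := (mul_pow _ _ _).symm
    exact le_of_pow_le_pow_left₀ (by omega) (by positivity) h1
  -- K is a proper subspace; choose a unit normal vector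
  have hKne : K ≠ ⊤ := by
    intro htop
    set f : Fin (D-1) → Euc D := fun j => x ⟨j.1, by omega⟩ with hf
    have hsub : x '' Set.Iio i₀ ⊆ Set.range f := by
      rintro _ ⟨i, hi, rfl⟩
      have hilt : i.1 < D - 1 := by
        have := hi
        rw [Set.mem_Iio, Fin.lt_def] at this
        simpa [hi₀] using this
      exact ⟨⟨i.1, hilt⟩, by simp [hf]⟩
    have hle : K ≤ span ℝ (Set.range f) := span_mono hsub
    have h1 : Module.finrank ℝ K ≤ Module.finrank ℝ (span ℝ (Set.range f)) :=
      Submodule.finrank_mono hle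
    have h2 : Module.finrank ℝ (span ℝ (Set.range f)) ≤ D - 1 := by
      have := finrank_range_le_card (R := ℝ) f
      simpa [Set.finrank] using this
    have h3 : Module.finrank ℝ K = D := by
      rw [htop, finrank_top]
      simp [finrank_euclideanSpace_fin]
    omega
  have hKbot : Kᗮ ≠ ⊥ := by
    rw [Ne, Submodule.orthogonal_eq_bot_iff]
    exact hKne
  obtain ⟨v₀, hv₀K, hv₀⟩ := Submodule.exists_mem_ne_zero_of_ne_bot hKbot
  set v : Euc D := ‖v₀‖⁻¹ • v₀ with hv
  have hvnorm : ‖v‖ = 1 := by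
    rw [hv, norm_smul, norm_inv, norm_norm]
    exact inv_mul_cancel₀ (norm_ne_zero_iff.2 hv₀)
  have hvK : v ∈ Kᗮ := Kᗮ.smul_mem _ hv₀K
  -- the key bound
  have hkey : ∀ z ∈ E, |(inner ℝ v z : ℝ) - (inner ℝ v x₀ : ℝ)| ≤ (Nat.factorial D : ℝ) * η := by
    intro z hz
    have hw : z - x₀ ∈ S := Finset.mem_image_of_mem _ hz
    set w : Euc D := z - x₀ with hwdef
    have h1 : (inner ℝ v z : ℝ) - (inner ℝ v x₀ : ℝ) = (inner ℝ v w : ℝ) := by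
      rw [hwdef, inner_sub_right]
    have h2 : (inner ℝ v w : ℝ)
        = (inner ℝ v (w - (orthogonalProjection K w : Euc D)) : ℝ) := by
      have h3 : (inner ℝ v ((orthogonalProjection K w : Euc D)) : ℝ) = 0 := by
        rw [real_inner_comm]
        exact hvK _ (orthogonalProjection K w).2
      conv_rhs => rw [inner_sub_right]
      rw [h3, sub_zero]
    calc |(inner ℝ v z : ℝ) - (inner ℝ v x₀ : ℝ)|
        = |(inner ℝ v (w - (orthogonalProjection K w : Euc D)) : ℝ)| := by rw [h1, h2]
      _ ≤ ‖v‖ * ‖w - (orthogonalProjection K w : Euc D)‖ := abs_real_inner_le_norm _ _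
      _ = ‖w - (orthogonalProjection K w : Euc D)‖ := by rw [hvnorm, one_mul]
      _ ≤ ‖x i₀ - (orthogonalProjection K (x i₀) : Euc D)‖ := hxmax i₀ w hw
      _ = ‖g i₀‖ := congrArg _ (sub_proj_eq_gramSchmidt x i₀)
      _ ≤ (Nat.factorial D : ℝ) * η := hball
  refine ⟨v, (inner ℝ v x₀ : ℝ), hvnorm, ?_, ?_⟩
  · intro z hz
    have := hkey z hz
    have hpos : (0:ℝ) ≤ (Nat.factorial D : ℝ) * η := by positivity
    calc |(inner ℝ v z : ℝ) - (inner ℝ v x₀ : ℝ)| ≤ (Nat.factorial D : ℝ) * η := this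
      _ ≤ 2 * (Nat.factorial D : ℝ) * η := by linarith
  · intro z hz
    have := hkey z hz
    have hnorm : ‖(z + (2 * ((inner ℝ v x₀ : ℝ) - (inner ℝ v z : ℝ))) • v) - z‖
        = 2 * |(inner ℝ v z : ℝ) - (inner ℝ v x₀ : ℝ)| := by
      have h1 : (z + (2 * ((inner ℝ v x₀ : ℝ) - (inner ℝ v z : ℝ))) • v) - z
          = (2 * ((inner ℝ v x₀ : ℝ) - (inner ℝ v z : ℝ))) • v := by abel
      rw [h1, norm_smul, hvnorm, mul_one]
      rw [Real.norm_eq_abs, abs_mul, abs_two, abs_sub_comm]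
    rw [hnorm]
    linarith
end
end

section
/- Let 0 < ε < C and let Φ : ℝ^D → ℝ^D be an ε-distorted diffeomorphism with Φ(0) = 0 and |Φ(e_i) − e_i| ≤ Cε for each standard basis vector e_i. Then |Φ(x) − x| ≤ C'ε for all x ∈ B(0,1), where C' depends only on D. -/
noncomputable section

open Filter in
private theorem bilip (D : ℕ) (ε : ℝ) (hε : 0 < ε) (Φ : Euc D → Euc D)
    (hsm : ContDiff ℝ (⊤ : ℕ∞) Φ) (hbij : Function.Bijective Φ)
    (hder : ∀ x v : Euc D,
      (1 + ε)⁻¹ * ‖v‖ ^ 2 ≤ ‖fderiv ℝ Φ x v‖ ^ 2 ∧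
      ‖fderiv ℝ Φ x v‖ ^ 2 ≤ (1 + ε) * ‖v‖ ^ 2) :
    ∀ x y : Euc D, ‖x - y‖ ≤ (1+ε) * ‖Φ x - Φ y‖ ∧ ‖Φ x - Φ y‖ ≤ (1+ε) * ‖x - y‖ := by
  have hε1 : (1:ℝ) ≤ 1 + ε := by linarith
  have hε0 : (0:ℝ) < 1 + ε := by linarith
  -- upper Lipschitz
  have hub : ∀ x y : Euc D, ‖Φ x - Φ y‖ ≤ (1+ε) * ‖x - y‖ := by
    intro x y
    apply Convex.norm_image_sub_le_of_norm_fderiv_le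
      (fun a _ => (hsm.differentiable (by simp)).differentiableAt)
      (fun a _ => ?_) convex_univ (Set.mem_univ y) (Set.mem_univ x)
    apply ContinuousLinearMap.opNorm_le_bound _ (le_of_lt hε0)
    intro v
    have h2 := (hder a v).2
    nlinarith [norm_nonneg ((fderiv ℝ Φ a) v), norm_nonneg v,
      mul_nonneg (le_of_lt hε0) (norm_nonneg v)]
  set g := Function.invFun Φ with hgdef
  have hgl : Function.LeftInverse g Φ := Function.leftInverse_invFun hbij.1
  have key : ∀ a : Euc D, DifferentiableAt ℝ g (Φ a) ∧ ‖fderiv ℝ g (Φ a)‖ ≤ 1 + ε := by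
    intro a
    set A := fderiv ℝ Φ a with hA
    have hbijA : Function.Bijective A.toLinearMap := by
      have hinj : Function.Injective A.toLinearMap := by
        rw [← LinearMap.ker_eq_bot, LinearMap.ker_eq_bot']
        intro v hv
        have h1 := (hder a v).1
        rw [← hA, show A v = 0 from hv] at h1
        simp at h1
        have hnv : ‖v‖ = 0 := by
          by_contra h
          have h0 : 0 < ‖v‖ := lt_of_le_of_ne (norm_nonneg v) (Ne.symm h)
          nlinarith [mul_pos (inv_pos.mpr hε0) (pow_pos h0 2)]
        exact norm_eq_zero.mp hnv
      exact ⟨hinj, (LinearMap.injective_iff_surjective).mp hinj⟩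
    have hstrict : HasStrictFDerivAt Φ A a :=
      (hsm.contDiffAt).hasStrictFDerivAt (by simp)
    set e := (LinearEquiv.ofBijective A.toLinearMap hbijA).toContinuousLinearEquiv with he
    have hcoe : (e : Euc D →L[ℝ] Euc D) = A := by ext v; rfl
    have hstrict' : HasStrictFDerivAt Φ (e : Euc D →L[ℝ] Euc D) a := hcoe ▸ hstrict
    have hg : HasFDerivAt g ((e.symm : Euc D →L[ℝ] Euc D)) (Φ a) :=
      (hstrict'.to_local_left_inverse (Eventually.of_forall fun x => hgl x)).hasFDerivAt
    refine ⟨hg.differentiableAt, ?_⟩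
    rw [hg.fderiv]
    apply ContinuousLinearMap.opNorm_le_bound _ (le_of_lt hε0)
    intro w
    have hAv : A (e.symm w) = w := by
      rw [← hcoe]; exact e.apply_symm_apply w
    have h1 := (hder a (e.symm w)).1
    rw [← hA, hAv] at h1
    have h1' : ‖e.symm w‖ ^ 2 ≤ (1+ε) * ‖w‖ ^ 2 := (inv_mul_le_iff₀ hε0).mp h1
    have hsame : (e.symm : Euc D →L[ℝ] Euc D) w = e.symm w := rfl
    rw [hsame]
    nlinarith [norm_nonneg (e.symm w), norm_nonneg w,
      mul_nonneg (le_of_lt hε0) (norm_nonneg w)]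
  have hlb : ∀ x y : Euc D, ‖x - y‖ ≤ (1+ε) * ‖Φ x - Φ y‖ := by
    intro x y
    have := Convex.norm_image_sub_le_of_norm_fderiv_le
      (f := g) (C := 1+ε) (s := (Set.univ : Set (Euc D)))
      (fun b _ => by obtain ⟨a, rfl⟩ := hbij.2 b; exact (key a).1)
      (fun b _ => by obtain ⟨a, rfl⟩ := hbij.2 b; exact (key a).2)
      convex_univ (Set.mem_univ (Φ y)) (Set.mem_univ (Φ x))
    rwa [hgl, hgl] at this
  exact fun x y => ⟨hlb x y, hub x y⟩

lemma sqdiff {a b M S : ℝ} (ha : 0 ≤ a) (hb : 0 ≤ b) (h1 : a - b ≤ M) (h2 : b - a ≤ M)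
    (hS : a + b ≤ S) (hM : 0 ≤ M) : |a^2 - b^2| ≤ M * S := by
  rw [abs_le]; constructor <;> nlinarith


set_option maxHeartbeats 2000000 in
/-- a distorted diffeomorphism fixing 0 and nearly fixing the basis
vectors is Cε-close to the identity on the unit ball. -/
theorem stmt19 (D : ℕ) (C : ℝ) (hC : 0 < C) :
    ∃ C' : ℝ, 0 < C' ∧
    ∀ (ε : ℝ) (Φ : Euc D → Euc D), 0 < ε → ε < C →
      DistortedDiffeo D ε Φ → Φ 0 = 0 →
      (∀ i : Fin D,
        ‖Φ (EuclideanSpace.single i (1:ℝ)) - EuclideanSpace.single i (1:ℝ)‖ ≤ C * ε) →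
      ∀ x ∈ Metric.ball (0 : Euc D) 1, ‖Φ x - x‖ ≤ C' * ε := by
  set K : ℝ := (1+C)*(2+C) + (3*C+2)*(4+C) with hK
  have hKpos : 0 < K := by positivity
  refine ⟨Real.sqrt D * K + 1, by positivity, ?_⟩
  intro ε Φ hε hεC hΦ h0 hbasis x hx
  obtain ⟨hsm, hbij, hder⟩ := hΦ
  have hlip := bilip D ε hε Φ hsm hbij hder
  have hε1 : (1:ℝ) < 1 + ε := by linarith
  have hεC' : 1 + ε ≤ 1 + C := by linarith
  rw [Metric.mem_ball, dist_zero_right] at hx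
  set y := Φ x with hy
  have hxn : ‖x‖ ≤ 1 := hx.le
  -- ‖y‖ bounds
  have h1 : ‖x‖ ≤ (1+ε) * ‖y‖ := by
    have := (hlip x 0).1; rwa [h0, sub_zero, sub_zero] at this
  have h2 : ‖y‖ ≤ (1+ε) * ‖x‖ := by
    have := (hlip x 0).2; rwa [h0, sub_zero, sub_zero] at this
  have hyn : ‖y‖ ≤ 1 + C := by nlinarith
  -- coordinate estimate
  have coord : ∀ i : Fin D, |(y - x) i| ≤ K * ε := by
    intro i
    set e : Euc D := EuclideanSpace.single i (1:ℝ) with he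
    set f : Euc D := Φ e with hf
    have hen : ‖e‖ = 1 := by simp [he]
    have hfe : ‖f - e‖ ≤ C * ε := hbasis i
    have hxe : ‖x - e‖ ≤ 2 := by
      calc ‖x - e‖ ≤ ‖x‖ + ‖e‖ := norm_sub_le x e
      _ ≤ 2 := by rw [hen]; linarith
    have h3 : ‖x - e‖ ≤ (1+ε) * ‖y - f‖ := (hlip x e).1
    have h4 : ‖y - f‖ ≤ (1+ε) * ‖x - e‖ := (hlip x e).2
    have hyf : ‖y - f‖ ≤ 2*(1+C) := by nlinarith
    have hye : ‖y - e‖ ≤ 2 + C := by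
      calc ‖y - e‖ ≤ ‖y‖ + ‖e‖ := norm_sub_le y e
      _ ≤ 2 + C := by rw [hen]; linarith
    -- |‖y-e‖ - ‖y-f‖| ≤ ‖f - e‖
    have htri : |‖y - e‖ - ‖y - f‖| ≤ ‖f - e‖ := by
      have := abs_norm_sub_norm_le (y - e) (y - f)
      simpa [sub_sub_sub_cancel_left] using this
    rw [abs_le] at htri
    -- square differences
    have hsq1 : |‖y‖^2 - ‖x‖^2| ≤ (1+C)*ε * (2+C) := by
      apply sqdiff (norm_nonneg y) (norm_nonneg x) ?_ ?_ (by linarith) (by positivity)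
      · nlinarith [norm_nonneg x]
      · nlinarith [norm_nonneg y]
    have hsq2 : |‖y - e‖^2 - ‖x - e‖^2| ≤ (3*C+2)*ε * (4+C) := by
      apply sqdiff (norm_nonneg (y-e)) (norm_nonneg (x-e)) ?_ ?_ (by linarith) (by positivity)
      · nlinarith [norm_nonneg (x-e), norm_nonneg (f-e)]
      · nlinarith [norm_nonneg (y-f), norm_nonneg (f-e)]
    -- polarization
    have hpol : ∀ u : Euc D, 2 * (inner ℝ u e : ℝ) = ‖u‖^2 + 1 - ‖u - e‖^2 := by
      intro u
      have := norm_sub_sq_real u e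
      rw [hen] at this; linarith
    have hio : (inner ℝ (y - x) e : ℝ) = (y - x) i := by
      rw [he]
      rw [EuclideanSpace.inner_single_right]
      simp
    have h2v : 2 * ((y-x) i) = (‖y‖^2 - ‖x‖^2) - (‖y-e‖^2 - ‖x-e‖^2) := by
      rw [← hio, inner_sub_left]
      have hy' := hpol y
      have hx' := hpol x
      linarith
    rw [abs_le] at hsq1 hsq2 ⊢
    constructor
    · nlinarith [hsq1.1, hsq2.2]
    · nlinarith [hsq1.2, hsq2.1]
  -- sum up coordinates
  have hnorm : ‖y - x‖ ≤ Real.sqrt D * (K * ε) := by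
    rw [EuclideanSpace.norm_eq]
    have hsum : ∑ i, ‖(y - x) i‖^2 ≤ (D : ℝ) * (K * ε)^2 := by
      calc ∑ i, ‖(y - x) i‖^2 ≤ ∑ _i : Fin D, (K * ε)^2 := by
            apply Finset.sum_le_sum
            intro i _
            have := coord i
            have h0' : ‖(y - x) i‖ = |(y - x) i| := Real.norm_eq_abs _
            nlinarith [abs_nonneg ((y-x) i)]
      _ = (D : ℝ) * (K * ε)^2 := by simp [Finset.sum_const]
    calc Real.sqrt (∑ i, ‖(y - x) i‖^2) ≤ Real.sqrt ((D:ℝ) * (K*ε)^2) := Real.sqrt_le_sqrt hsum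
    _ = Real.sqrt D * (K * ε) := by
        rw [Real.sqrt_mul (by positivity), Real.sqrt_sq (by positivity)]
  calc ‖Φ x - x‖ = ‖y - x‖ := rfl
  _ ≤ Real.sqrt D * (K * ε) := hnorm
  _ ≤ (Real.sqrt D * K + 1) * ε := by nlinarith [Real.sqrt_nonneg (D:ℝ)]
end
end
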